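/- In the Jiang-Su construction, given a prime dimension drop algebra datum (p, q) with gcd(p,q) = 1, p,q ≥ 2, set n = pq. Then there exist positive integers k₁, k₂, k₃ with p | k₁, q | k₃, such that n' = (k₁ + k₂ + k₃)·n can be written as n' = p'q' with gcd(p', q') = 1 and p' ≥ 2p, q' ≥ 2q. -/
import Mathlib

/-- Jiang-Su number-theoretic lemma: given coprime `p, q ≥ 2` and `n = p·q`, there are
positive integers `k₁, k₂, k₃` with `p ∣ k₁` and `q ∣ k₃` such that
`n' = (k₁ + k₂ + k₃)·n = p'·q'` with `p', q'` coprime, `p' ≥ 2p` and `q' ≥ 2q`. -/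
theorem stmt_12 (p q : ℕ) (hp : 2 ≤ p) (hq : 2 ≤ q) (hpq : Nat.Coprime p q) :
    ∃ k₁ k₂ k₃ : ℕ, 0 < k₁ ∧ 0 < k₂ ∧ 0 < k₃ ∧ p ∣ k₁ ∧ q ∣ k₃ ∧
      ∃ p' q' : ℕ, (k₁ + k₂ + k₃) * (p * q) = p' * q' ∧ Nat.Coprime p' q' ∧
        2 * p ≤ p' ∧ 2 * q ≤ q' := by
  -- p ≠ q since coprime and both ≥ 2, so pq ≥ 6 and (p-1)(q-1) ≥ 2
  have hne : p ≠ q := by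
    intro h; subst h
    have : p = 1 := by simpa [Nat.Coprime, Nat.gcd_self] using hpq
    omega
  have h3 : 3 ≤ p ∨ 3 ≤ q := by omega
  have hle : p + q + 1 ≤ p * q := by rcases h3 with h | h <;> nlinarith
  have hk₂ : 0 < p * q - p - q := by omega
  refine ⟨p, p * q - p - q, q, by omega, hk₂, by omega, dvd_rfl, dvd_rfl,
    p ^ 2, q ^ 2, ?_, hpq.pow 2 2, by nlinarith, by nlinarith⟩
  have hsum : p + (p * q - p - q) + q = p * q := by omega
  rw [hsum]; ring
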